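/- Let $(i_1,\dots,i_n)$ be an enumeration of $I$ (each element of $I$ occurring exactly once), let $c=s_{i_1}\circ\cdots\circ s_{i_n}$, fix $1\le j\le n$, and set $\mu=\omega_{i_j}-\sum_{\ell=1}^{j}a_{i_\ell i_j}\omega_{i_\ell}\in\mathcal{P}$. Then $c\mu-\mu=\alpha_{i_j}$. -/

import Mathlib

open Finset

/-- The weight lattice `𝒫`: the free abelian group with basis `{αᵢ, ωᵢ : i ∈ I}`,
represented by pairs of coefficient vectors (first component: coefficients of the `αᵢ`,
second component: coefficients of the `ωᵢ`). -/
abbrev PLat (n : ℕ) := (Fin n → ℤ) × (Fin n → ℤ)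

/-- The coroot lattice `𝒬^∨`: the free abelian group with basis `{αᵢ^∨ : i ∈ I}`,
represented by coefficient vectors. -/
abbrev QvLat (n : ℕ) := Fin n → ℤ

variable {n : ℕ}

/-- The basis element `α_j^∨` of `𝒬^∨`. -/
def coroot (j : Fin n) : QvLat n := fun k => if k = j then 1 else 0

/-- The basis element `α_j` of `𝒫`. -/
def alP (j : Fin n) : PLat n := (fun k => if k = j then 1 else 0, 0)

/-- The basis element `ω_j` of `𝒫`. -/
def omP (j : Fin n) : PLat n := (0, fun k => if k = j then 1 else 0)

/-- The biadditive pairing `𝒬^∨ × 𝒫 → ℤ` with `(αᵢ^∨, α_j) = a_{ij}` and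
`(αᵢ^∨, ω_j) = δ_{ij}`. -/
def pairQP (A : Fin n → Fin n → ℤ) (x : QvLat n) (lam : PLat n) : ℤ :=
  (∑ a, ∑ b, x a * A a b * lam.1 b) + ∑ a, x a * lam.2 a

/-- The simple reflection `sᵢ` on `𝒫`: `sᵢ α_j = α_j - a_{ij} αᵢ`,
`sᵢ ω_j = ω_j - δ_{ij} αᵢ`. -/
def sP (A : Fin n → Fin n → ℤ) (a : Fin n) (lam : PLat n) : PLat n :=
  (fun j => if j = a then lam.1 a - ((∑ k, A a k * lam.1 k) + lam.2 a) else lam.1 j,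
   lam.2)

/-- The simple reflection `sᵢ^∨` on `𝒬^∨`: `sᵢ^∨ α_j^∨ = α_j^∨ - a_{ji} αᵢ^∨`. -/
def sQ (A : Fin n → Fin n → ℤ) (a : Fin n) (x : QvLat n) : QvLat n :=
  fun j => if j = a then x a - ∑ k, A k a * x k else x j

/-- `w_ℓ = s_{i₁} ∘ ⋯ ∘ s_{i_ℓ}` on `𝒫` (with `w₀ = id`). -/
def wP (A : Fin n → Fin n → ℤ) (ii : ℕ → Fin n) : ℕ → PLat n → PLat n
  | 0 => id
  | (l+1) => wP A ii l ∘ sP A (ii (l+1))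

/-- `w_ℓ^∨ = s_{i₁}^∨ ∘ ⋯ ∘ s_{i_ℓ}^∨` on `𝒬^∨` (with `w₀ = id`). -/
def wQ (A : Fin n → Fin n → ℤ) (ii : ℕ → Fin n) : ℕ → QvLat n → QvLat n
  | 0 => id
  | (l+1) => wQ A ii l ∘ sQ A (ii (l+1))

/-- `k⁺ = min({ℓ : k < ℓ ≤ m, i_ℓ = i_k} ∪ {m+1})`. -/
noncomputable def kplus (ii : ℕ → Fin n) (m k : ℕ) : ℕ :=
  sInf ({l | k < l ∧ l ≤ m ∧ ii l = ii k} ∪ {m+1})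

/-- `k⁻ = max({ℓ : 1 ≤ ℓ < k, i_ℓ = i_k} ∪ {0})`. -/
noncomputable def kminus (ii : ℕ → Fin n) (k : ℕ) : ℕ :=
  sSup ({l | 1 ≤ l ∧ l < k ∧ ii l = ii k} ∪ {0})

/-- The standard basis vector `ε_k` of `ℤ^m` (1-based index), with the convention
`ε_s = 0` for `s ∉ {1,…,m}`. -/
def eps (m k : ℕ) : Fin m → ℤ := fun j => if (j : ℕ) + 1 = k then 1 else 0

/-- `φ_𝐢(ε_k) = -ε_k - ε_{k⁻} - ∑_{ℓ : ℓ < k < ℓ⁺} a_{i_ℓ i_k} ε_ℓ`. -/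
noncomputable def phiE (A : Fin n → Fin n → ℤ) (ii : ℕ → Fin n) (m k : ℕ) :
    Fin m → ℤ :=
  -(eps m k) - eps m (kminus ii k)
    - ∑ l : Fin m, (if (l:ℕ)+1 < k ∧ k < kplus ii m ((l:ℕ)+1)
        then A (ii ((l:ℕ)+1)) (ii k) else 0) • eps m ((l:ℕ)+1)

/-- The endomorphism `φ_𝐢` of `ℤ^m`, extended additively from its values on the basis. -/
noncomputable def phiMap (A : Fin n → Fin n → ℤ) (ii : ℕ → Fin n) (m : ℕ)
    (v : Fin m → ℤ) : Fin m → ℤ :=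
  ∑ k : Fin m, v k • phiE A ii m ((k:ℕ)+1)

/-- `φ'_𝐢(ε_ℓ) = -∑_{k=1}^{ℓ} (w_k^∨ α_{i_k}^∨, w_ℓ ω_{i_ℓ}) ε_k`. -/
def phiE' (A : Fin n → Fin n → ℤ) (ii : ℕ → Fin n) (m l : ℕ) : Fin m → ℤ :=
  -∑ k : Fin m, (if (k:ℕ)+1 ≤ l then
      pairQP A (wQ A ii ((k:ℕ)+1) (coroot (ii ((k:ℕ)+1)))) (wP A ii l (omP (ii l)))
    else 0) • eps m ((k:ℕ)+1)

/-- The endomorphism `φ'_𝐢` of `ℤ^m`, extended additively from its values on the basis. -/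
def phiMap' (A : Fin n → Fin n → ℤ) (ii : ℕ → Fin n) (m : ℕ)
    (v : Fin m → ℤ) : Fin m → ℤ :=
  ∑ l : Fin m, v l • phiE' A ii m ((l:ℕ)+1)

/-- `∂_𝐢 ε_k = ε_k - ε_{k⁻}`. -/
noncomputable def derE (ii : ℕ → Fin n) (m k : ℕ) : Fin m → ℤ :=
  eps m k - eps m (kminus ii k)

/-- The endomorphism `∂_𝐢` of `ℤ^m`. -/
noncomputable def derMap (ii : ℕ → Fin n) (m : ℕ) (v : Fin m → ℤ) : Fin m → ℤ :=
  ∑ k : Fin m, v k • derE ii m ((k:ℕ)+1)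

/-- `∫_𝐢 ε_k = ε_k + ε_{k⁻} + ε_{(k⁻)⁻} + ⋯` (summing along the chain `k > k⁻ > ⋯ > 0`). -/
noncomputable def intE (ii : ℕ → Fin n) (m : ℕ) (k : ℕ) : Fin m → ℤ :=
  if h : kminus ii k < k then eps m k + intE ii m (kminus ii k) else eps m k
termination_by k
decreasing_by exact h

/-- The endomorphism `∫_𝐢` of `ℤ^m`. -/
noncomputable def intMap (ii : ℕ → Fin n) (m : ℕ) (v : Fin m → ℤ) : Fin m → ℤ :=
  ∑ k : Fin m, v k • intE ii m ((k:ℕ)+1)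

/-- The skew-symmetric biadditive form `Λ_𝐢` on `ℤ^m` with
`Λ_𝐢(ε_k, ε_ℓ) = sgn(k-ℓ) c_{i_k i_ℓ}` where `c_{ij} = dᵢ a_{ij}`. -/
def LamF (A : Fin n → Fin n → ℤ) (d : Fin n → ℤ) (ii : ℕ → Fin n) (m : ℕ)
    (a b : Fin m → ℤ) : ℤ :=
  ∑ k : Fin m, ∑ l : Fin m, a k * b l *
    ((((k:ℕ):ℤ) - ((l:ℕ):ℤ)).sign *
      (d (ii ((k:ℕ)+1)) * A (ii ((k:ℕ)+1)) (ii ((l:ℕ)+1))))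

/-- The biadditive form `Φ_𝐢` on `ℤ^m` with `Φ_𝐢(ε_k,ε_ℓ) = -d_{i_k}` if `k = ℓ`,
`= -c_{i_ℓ i_k}` if `ℓ < k`, and `= 0` if `ℓ > k`. -/
def PhiF (A : Fin n → Fin n → ℤ) (d : Fin n → ℤ) (ii : ℕ → Fin n) (m : ℕ)
    (a b : Fin m → ℤ) : ℤ :=
  ∑ k : Fin m, ∑ l : Fin m, a k * b l *
    (if (k:ℕ) = (l:ℕ) then -(d (ii ((k:ℕ)+1)))
     else if (l:ℕ) < (k:ℕ) then
       -(d (ii ((l:ℕ)+1)) * A (ii ((l:ℕ)+1)) (ii ((k:ℕ)+1)))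
     else 0)

/-- The entry `b_{pk}` of the exchange matrix `B̃_𝐢`. -/
noncomputable def bcoef (A : Fin n → Fin n → ℤ) (ii : ℕ → Fin n) (m p k : ℕ) : ℤ :=
  if p = kminus ii k then -1
  else if p < k ∧ k < kplus ii m p ∧ kplus ii m p < kplus ii m k then
    -(A (ii p) (ii k))
  else if k < p ∧ p < kplus ii m k ∧ kplus ii m k < kplus ii m p then
    A (ii p) (ii k)
  else if p = kplus ii m k then 1
  else 0

/-- The column `𝐛^k = ∑_p b_{pk} ε_p ∈ ℤ^m` of the exchange matrix. -/
noncomputable def bvec (A : Fin n → Fin n → ℤ) (ii : ℕ → Fin n) (m k : ℕ) :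
    Fin m → ℤ :=
  fun p => bcoef A ii m ((p:ℕ)+1) k

/-- `ρ_𝐢⁺(ε_k) = ε_k + ∑_{ℓ<k, ℓ⁺=m+1} a_{i_ℓ i_k} ε_ℓ`. -/
noncomputable def rhoPE (A : Fin n → Fin n → ℤ) (ii : ℕ → Fin n) (m k : ℕ) :
    Fin m → ℤ :=
  eps m k + ∑ l : Fin m, (if (l:ℕ)+1 < k ∧ kplus ii m ((l:ℕ)+1) = m+1
      then A (ii ((l:ℕ)+1)) (ii k) else 0) • eps m ((l:ℕ)+1)

/-- `ρ_𝐢⁻(ε_k) = ε_k - ∑_{ℓ≤k, ℓ⁺=m+1} a_{i_ℓ i_k} ε_ℓ`. -/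
noncomputable def rhoME (A : Fin n → Fin n → ℤ) (ii : ℕ → Fin n) (m k : ℕ) :
    Fin m → ℤ :=
  eps m k - ∑ l : Fin m, (if (l:ℕ)+1 ≤ k ∧ kplus ii m ((l:ℕ)+1) = m+1
      then A (ii ((l:ℕ)+1)) (ii k) else 0) • eps m ((l:ℕ)+1)

/-- The endomorphism `ρ_𝐢⁺` of `ℤ^m`. -/
noncomputable def rhoPMap (A : Fin n → Fin n → ℤ) (ii : ℕ → Fin n) (m : ℕ)
    (v : Fin m → ℤ) : Fin m → ℤ :=
  ∑ k : Fin m, v k • rhoPE A ii m ((k:ℕ)+1)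

/-- The endomorphism `ρ_𝐢⁻` of `ℤ^m`. -/
noncomputable def rhoMMap (A : Fin n → Fin n → ℤ) (ii : ℕ → Fin n) (m : ℕ)
    (v : Fin m → ℤ) : Fin m → ℤ :=
  ∑ k : Fin m, v k • rhoME A ii m ((k:ℕ)+1)

/-- `𝐚_λ = -∑_{k=1}^m (w_k^∨ α_{i_k}^∨, w_m λ) ε_k ∈ ℤ^m`. -/
def avec (A : Fin n → Fin n → ℤ) (ii : ℕ → Fin n) (m : ℕ) (lam : PLat n) :
    Fin m → ℤ :=
  fun k => -(pairQP A (wQ A ii ((k:ℕ)+1) (coroot (ii ((k:ℕ)+1)))) (wP A ii m lam))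

/-- `|𝐚| = ∑_{k=1}^m a_k α_{i_k} ∈ 𝒬 ⊆ 𝒫`. -/
def degP (ii : ℕ → Fin n) (m : ℕ) (a : Fin m → ℤ) : PLat n :=
  (fun j => ∑ k : Fin m, if ii ((k:ℕ)+1) = j then a k else 0, 0)

/-- The pairing `(μ, λ) = ∑ mᵢ dᵢ (αᵢ^∨, λ)` for `μ = ∑ mᵢ αᵢ ∈ 𝒬` and `λ ∈ 𝒫`
(induced by identifying `αᵢ` with `dᵢ αᵢ^∨`). -/
def pairAl (A : Fin n → Fin n → ℤ) (d : Fin n → ℤ) (mu lam : PLat n) : ℤ :=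
  ∑ j, mu.1 j * (d j * pairQP A (coroot j) lam)


/-!
Put `μ = ω_{i_j} - ∑_{ℓ ≤ j} a_{i_ℓ i_j} ω_{i_ℓ}` and apply `s_{i_n}`, …, `s_{i_1}` in turn.
Since `(α_{i_p}^∨, μ) = δ_{pj} - [p ≤ j] a_{i_p i_j}`, the reflection `s_{i_p}` fixes `μ`
for `p > j`; at `p = j` the pairing is `1 - a_{i_j i_j} = -1`, so `s_{i_j} μ = μ + α_{i_j}`;
and for `p < j` the pairing with `μ + α_{i_j}` is `-a_{i_p i_j} + a_{i_p i_j} = 0`.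
Hence `cμ = μ + α_{i_j}`.
-/

def coxeterMu (A : Fin n → Fin n → ℤ) (ii : ℕ → Fin n) (j : ℕ) : PLat n :=
  omP (ii j) - ∑ l : Fin n,
    (if (l:ℕ)+1 ≤ j then A (ii ((l:ℕ)+1)) (ii j) else 0) • omP (ii ((l:ℕ)+1))

section Pairing

variable (A : Fin n → Fin n → ℤ)

theorem pairQP_add (x : QvLat n) (lam lam' : PLat n) :
    pairQP A x (lam + lam') = pairQP A x lam + pairQP A x lam' := by
  simp only [pairQP, Prod.fst_add, Prod.snd_add, Pi.add_apply, mul_add, sum_add_distrib]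
  ring

def pairQPHom (x : QvLat n) : PLat n →+ ℤ :=
  AddMonoidHom.mk' (pairQP A x) (pairQP_add A x)

@[simp]
theorem pairQPHom_apply (x : QvLat n) (lam : PLat n) : pairQPHom A x lam = pairQP A x lam :=
  rfl

theorem pairQP_coroot (a : Fin n) (lam : PLat n) :
    pairQP A (coroot a) lam = ∑ k, A a k * lam.1 k + lam.2 a := by
  simp [pairQP, coroot]

theorem pairQP_coroot_alP (a b : Fin n) : pairQP A (coroot a) (alP b) = A a b := by
  simp [pairQP_coroot, alP]

theorem pairQP_coroot_omP (a b : Fin n) :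
    pairQP A (coroot a) (omP b) = if a = b then 1 else 0 := by
  simp [pairQP_coroot, omP]

theorem sP_eq_sub_smul (a : Fin n) (lam : PLat n) :
    sP A a lam = lam - pairQP A (coroot a) lam • alP a := by
  ext k
  · by_cases h : k = a
    · subst h; simp [sP, alP, pairQP_coroot]
    · simp [sP, alP, h]
  · simp [sP, alP]

end Pairing

section Enumeration

variable {A : Fin n → Fin n → ℤ} {ii : ℕ → Fin n} {j : ℕ}

theorem apply_succ_eq_apply_iff
    (hinj : Function.Injective fun k : Fin n => ii ((k : ℕ) + 1))
    (hj1 : 1 ≤ j) (hj2 : j ≤ n) (p : Fin n) :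
    ii ((p : ℕ) + 1) = ii j ↔ (p : ℕ) + 1 = j := by
  refine ⟨fun h => ?_, fun h => h ▸ rfl⟩
  have := congrArg Fin.val (@hinj p ⟨j - 1, by omega⟩ (by simpa [Nat.sub_add_cancel hj1] using h))
  simp only at this
  omega

theorem pairQP_coroot_coxeterMu
    (hinj : Function.Injective fun k : Fin n => ii ((k : ℕ) + 1))
    (hj1 : 1 ≤ j) (hj2 : j ≤ n) (p : Fin n) :
    pairQP A (coroot (ii ((p : ℕ) + 1))) (coxeterMu A ii j) =
      (if (p : ℕ) + 1 = j then 1 else 0) -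
        if (p : ℕ) + 1 ≤ j then A (ii ((p : ℕ) + 1)) (ii j) else 0 := by
  change pairQPHom A _ (coxeterMu A ii j) = _
  simp only [coxeterMu, map_sub, map_sum, map_zsmul, pairQPHom_apply,
    pairQP_coroot_omP, smul_eq_mul]
  rw [sum_eq_single p (fun l _ hl => by simp [hinj.ne (Ne.symm hl)]) (by simp)]
  simp [apply_succ_eq_apply_iff hinj hj1 hj2]

theorem sP_coxeterMu_add (hA : ∀ i, A i i = 2)
    (hinj : Function.Injective fun k : Fin n => ii ((k : ℕ) + 1))
    (hj1 : 1 ≤ j) (hj2 : j ≤ n) (p : Fin n) :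
    sP A (ii ((p : ℕ) + 1)) (coxeterMu A ii j + if (p : ℕ) + 1 < j then alP (ii j) else 0) =
      coxeterMu A ii j + if (p : ℕ) < j then alP (ii j) else 0 := by
  have hμ := pairQP_coroot_coxeterMu (A := A) hinj hj1 hj2 p
  rw [sP_eq_sub_smul]
  rcases lt_trichotomy ((p : ℕ) + 1) j with h | h | h
  · simp [h, pairQP_add, hμ, pairQP_coroot_alP, h.ne, h.le, (by omega : (p : ℕ) < j)]
  · subst h
    simp [hμ, hA]
  · have hpj : ¬ (p : ℕ) < j := by omega
    simp [hμ, h.ne', not_le.mpr h, not_lt.mpr h.le, hpj]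

theorem wP_coxeterMu_add (hA : ∀ i, A i i = 2)
    (hinj : Function.Injective fun k : Fin n => ii ((k : ℕ) + 1))
    (hj1 : 1 ≤ j) (hj2 : j ≤ n) {l : ℕ} (hl : l ≤ n) :
    wP A ii l (coxeterMu A ii j + if l < j then alP (ii j) else 0) =
      coxeterMu A ii j + alP (ii j) := by
  induction l with
  | zero => simp [wP, (by omega : 0 < j)]
  | succ l ih =>
    have hstep := sP_coxeterMu_add hA hinj hj1 hj2 ⟨l, by omega⟩
    exact (congrArg (wP A ii l) hstep).trans (ih (by omega))

end Enumeration

theorem coxeter_mu_general {n : ℕ}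
    (A : Fin n → Fin n → ℤ)
    (hA : ∀ i, A i i = 2)
    (ii : ℕ → Fin n)
    (henum : Function.Bijective (fun k : Fin n => ii ((k : ℕ) + 1)))
    (j : ℕ) (hj1 : 1 ≤ j) (hj2 : j ≤ n) :
    wP A ii n (omP (ii j) - ∑ l : Fin n,
        (if (l:ℕ)+1 ≤ j then A (ii ((l:ℕ)+1)) (ii j) else 0) • omP (ii ((l:ℕ)+1)))
      - (omP (ii j) - ∑ l : Fin n,
        (if (l:ℕ)+1 ≤ j then A (ii ((l:ℕ)+1)) (ii j) else 0) • omP (ii ((l:ℕ)+1)))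
      = alP (ii j) := by
  have hc := wP_coxeterMu_add hA henum.injective hj1 hj2 le_rfl
  rw [if_neg (not_lt.mpr hj2), add_zero] at hc
  change wP A ii n (coxeterMu A ii j) - coxeterMu A ii j = _
  rw [hc, add_sub_cancel_left]

/-- for an enumeration `(i₁,…,i_n)` of `I`, `c = s_{i₁} ∘ ⋯ ∘ s_{i_n}`,
and `μ = ω_{i_j} - ∑_{ℓ=1}^{j} a_{i_ℓ i_j} ω_{i_ℓ}`, one has `cμ - μ = α_{i_j}`. -/
theorem coxeter_mu {n : ℕ}
    (A : Fin n → Fin n → ℤ) (d : Fin n → ℤ)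
    (hA : ∀ i, A i i = 2) (hd : ∀ i, 0 < d i)
    (hsym : ∀ i j, d i * A i j = d j * A j i)
    (ii : ℕ → Fin n)
    (henum : Function.Bijective (fun k : Fin n => ii ((k : ℕ) + 1)))
    (j : ℕ) (hj1 : 1 ≤ j) (hj2 : j ≤ n) :
    wP A ii n (omP (ii j) - ∑ l : Fin n,
        (if (l:ℕ)+1 ≤ j then A (ii ((l:ℕ)+1)) (ii j) else 0) • omP (ii ((l:ℕ)+1)))
      - (omP (ii j) - ∑ l : Fin n,
        (if (l:ℕ)+1 ≤ j then A (ii ((l:ℕ)+1)) (ii j) else 0) • omP (ii ((l:ℕ)+1)))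
      = alP (ii j) :=
  coxeter_mu_general A hA ii henum j hj1 hj2
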